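/- Let A₁, ..., A_K be pairwise coprime polynomials over ℝ, each of degree n_i ≥ 1, and consider the family of rational functions { p^j / (A_i(p)²·∏_{l≠i} A_l(p)²) : 1 ≤ i ≤ K, 0 ≤ j ≤ n_i + m_i } where m_i ≤ n_i for all i with strict inequality for all but at most one i. Then these rational functions, viewed as elements of the field ℝ(p), are linearly independent over ℝ. -/

import Mathlib

/-!
Given a vanishing combination `∑ᵢ Bᵢ / Aᵢ²` with `deg Bᵢ ≤ nᵢ + mᵢ`, clearing denominators gives
`∑ᵢ Bᵢ ∏_{l ≠ i} A_l² = 0`; every term but the `i`-th is divisible by `Aᵢ²`, which is coprime to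
`∏_{l ≠ i} A_l²`, so `Aᵢ² ∣ Bᵢ`. As `deg Bᵢ < 2 nᵢ = deg Aᵢ²` unless `mᵢ = nᵢ`, all but at most
one `Bᵢ` vanish, and then the remaining one vanishes too.
-/

open Polynomial Finset

section Divisibility

variable {ι R : Type*} [Fintype ι] [DecidableEq ι]

theorem sum_mul_prod_erase_eq_zero_of_sum_div_eq_zero {L : Type*} [CommRing R] [IsDomain R]
    [Field L] [Algebra R L] [IsFractionRing R L] {Q B : ι → R} (hQ : ∀ i, Q i ≠ 0)
    (h : ∑ i, algebraMap R L (B i) / algebraMap R L (Q i) = 0) :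
    ∑ i, B i * ∏ l ∈ univ.erase i, Q l = 0 := by
  have hQL : ∀ i, algebraMap R L (Q i) ≠ 0 := fun i =>
    IsFractionRing.to_map_ne_zero_of_mem_nonZeroDivisors (mem_nonZeroDivisors_of_ne_zero (hQ i))
  refine IsFractionRing.injective R L ?_
  calc algebraMap R L (∑ i, B i * ∏ l ∈ univ.erase i, Q l)
      = (∑ i, algebraMap R L (B i) / algebraMap R L (Q i)) * ∏ l, algebraMap R L (Q l) := by
        simp only [map_sum, map_mul, map_prod, sum_mul]
        refine sum_congr rfl fun i _ => ?_
        rw [← mul_prod_erase univ _ (mem_univ i), ← mul_assoc, div_mul_cancel₀ _ (hQL i)]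
    _ = algebraMap R L 0 := by rw [h, zero_mul, map_zero]

theorem dvd_of_sum_mul_prod_erase_eq_zero [CommRing R] {Q B : ι → R}
    (hcop : Pairwise fun i j => IsCoprime (Q i) (Q j))
    (h : ∑ i, B i * ∏ l ∈ univ.erase i, Q l = 0) (i : ι) : Q i ∣ B i := by
  have hcop_i : IsCoprime (Q i) (∏ l ∈ univ.erase i, Q l) :=
    IsCoprime.prod_right fun l hl => hcop (ne_of_mem_erase hl).symm
  refine hcop_i.dvd_of_dvd_mul_right ?_
  have hsplit := add_sum_erase univ (fun k => B k * ∏ l ∈ univ.erase k, Q l) (mem_univ i)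
  rw [h, add_eq_zero_iff_eq_neg] at hsplit
  rw [hsplit, dvd_neg]
  exact dvd_sum fun k hk =>
    (dvd_prod_of_mem Q (mem_erase.mpr ⟨(ne_of_mem_erase hk).symm, mem_univ i⟩)).mul_left _

end Divisibility

section RatFunc

variable {ι K : Type*} [Fintype ι] [Field K]

theorem eq_zero_of_sum_div_eq_zero {Q B : ι → K[X]} (hQ : ∀ i, Q i ≠ 0)
    (hcop : Pairwise fun i j => IsCoprime (Q i) (Q j))
    (hdeg : ∀ i j, (Q i).natDegree ≤ (B i).natDegree → (Q j).natDegree ≤ (B j).natDegree → i = j)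
    (h : ∑ i, algebraMap K[X] (RatFunc K) (B i) / algebraMap K[X] (RatFunc K) (Q i) = 0)
    (i : ι) : B i = 0 := by
  classical
  have hdvd := dvd_of_sum_mul_prod_erase_eq_zero hcop
    (sum_mul_prod_erase_eq_zero_of_sum_div_eq_zero hQ h)
  have of_lt : ∀ k, (B k).natDegree < (Q k).natDegree → B k = 0 := fun k hk =>
    eq_zero_of_dvd_of_natDegree_lt (hdvd k) hk
  by_cases hi : (B i).natDegree < (Q i).natDegree
  · exact of_lt i hi
  have hothers : ∀ k ≠ i, B k = 0 := fun k hk =>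
    of_lt k (lt_of_not_ge fun hk' => hk (hdeg k i hk' (not_lt.mp hi)))
  rw [sum_eq_single i (fun k _ hk => by rw [hothers k hk, map_zero, zero_div])
    (fun h => absurd (mem_univ i) h), div_eq_zero_iff] at h
  exact (map_eq_zero_iff _ (IsFractionRing.injective K[X] (RatFunc K))).mp
    (h.resolve_right (RatFunc.algebraMap_ne_zero (hQ i)))

theorem linearIndependent_X_pow_div {d : ι → ℕ} (q : ι → RatFunc K)
    (h : ∀ B : ι → K[X], (∀ i, (B i).natDegree ≤ d i) →
      ∑ i, algebraMap K[X] (RatFunc K) (B i) / q i = 0 → ∀ i, B i = 0) :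
    LinearIndependent K
      (fun p : (i : ι) × Fin (d i + 1) => (RatFunc.X : RatFunc K) ^ (p.2 : ℕ) / q p.1) := by
  classical
  rw [Fintype.linearIndependent_iff]
  intro g hg ⟨i, j⟩
  set B : ι → K[X] := fun i => ∑ j : Fin (d i + 1), monomial j (g ⟨i, j⟩)
  have hBdeg : ∀ i, (B i).natDegree ≤ d i := fun i =>
    natDegree_sum_le_of_forall_le _ _ fun j _ =>
      (natDegree_monomial_le _).trans (Nat.lt_succ_iff.mp j.isLt)
  have hsum : ∑ i, algebraMap K[X] (RatFunc K) (B i) / q i = 0 := by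
    rw [← hg, ← univ_sigma_univ, sum_sigma]
    refine sum_congr rfl fun i _ => ?_
    simp only [B, map_sum, sum_div, ← C_mul_X_pow_eq_monomial, map_mul, map_pow,
      RatFunc.algebraMap_X, RatFunc.algebraMap_C, Algebra.smul_def, mul_div_assoc]
    rfl
  have hcoeff : (B i).coeff j = g ⟨i, j⟩ := by
    simp only [B, finsetSum_coeff, coeff_monomial, Fin.val_inj, sum_ite_eq', mem_univ, if_true]
  rw [← hcoeff, h B hBdeg hsum i, coeff_zero]

end RatFunc

/-- For pairwise coprime real polynomials `A_i` of degree `n_i ≥ 1`, the rational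
functions `p^j / A_i(p)²` for `1 ≤ i ≤ K`, `0 ≤ j ≤ n_i + m_i` (with `m_i ≤ n_i`, strict for
all but at most one `i`) are linearly independent over `ℝ` in `ℝ(p)`. -/
theorem rational_family_linearIndependent {K : ℕ} (n m : Fin K → ℕ)
    (A : Fin K → Polynomial ℝ)
    (hdA : ∀ i, (A i).natDegree = n i) (hn : ∀ i, 1 ≤ n i)
    (hm : ∀ i, m i ≤ n i)
    (hexc : ∀ i j, m i = n i → m j = n j → i = j)
    (hpair : ∀ i j, i ≠ j → IsCoprime (A i) (A j)) :
    LinearIndependent ℝ (fun p : (i : Fin K) × Fin (n i + m i + 1) =>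
      (RatFunc.X : RatFunc ℝ) ^ (p.2 : ℕ)
        / (algebraMap (Polynomial ℝ) (RatFunc ℝ) (A p.1)) ^ 2) := by
  refine linearIndependent_X_pow_div (d := fun i => n i + m i)
    (fun i => algebraMap ℝ[X] (RatFunc ℝ) (A i) ^ 2) fun B hB hsum => ?_
  have hA : ∀ i, A i ≠ 0 := fun i => ne_zero_of_natDegree_gt (hdA i ▸ hn i)
  have hdeg : ∀ i, (A i ^ 2).natDegree ≤ (B i).natDegree → m i = n i := fun i hi => by
    have := hB i
    have := hm i
    rw [natDegree_pow, hdA i] at hi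
    omega
  refine eq_zero_of_sum_div_eq_zero (Q := fun i => A i ^ 2) (fun i => pow_ne_zero 2 (hA i))
    (fun i j hij => (hpair i j hij).pow) (fun i j hi hj => hexc i j (hdeg i hi) (hdeg j hj)) ?_
  simpa only [map_pow] using hsum
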